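/- With the coupled random r-graph setup below, there exists ε₀ > 0 (depending only on r) such that for every fixed ε ∈ (0, ε₀) and any function g : ℕ → ℝ with g(n) → ∞ and g(n) = o(log n), with high probability as n → ∞ every nonempty set X ⊆ [n]∖W_σ with |X| ≤ Z = n(log n)^{−1/r} is r-expansive in G(σ). -/

import Mathlib

open Finset MeasureTheory Filter

noncomputable section
open scoped Classical

/-- The index set: `r`-element subsets of `[n]`. -/
abbrev RSubsets (n r : ℕ) := {S : Finset (Fin n) // S.card = r}

/-- The coupled model: independent `ξ_S`, uniform on `[0,1]`, one for each `r`-subset `S`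
of `[n]`; formally the product of uniform measures on the coordinates. -/
def xiMeasure (n r : ℕ) : Measure (RSubsets n r → ℝ) :=
  Measure.pi fun _ => volume.restrict (Set.Icc (0 : ℝ) 1)

/-- `W_σ`: the set of vertices lying in at most `ε log n` edges of `G(σ)`
(the edges of `G(σ)` being the `r`-subsets `S` with `ξ_S ≤ σ`). -/
def lowDeg {n r : ℕ} (ξ : RSubsets n r → ℝ) (σ : ℝ) (ε : ℝ) : Finset (Fin n) :=
  Finset.univ.filter fun v : Fin n =>
    (((Finset.univ : Finset (RSubsets n r)).filter fun S => v ∈ S.1 ∧ ξ S ≤ σ).card : ℝ) ≤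
      ε * Real.log n

/-! If a nonempty `X` avoiding `W_σ` is not `r`-expansive, some `Y` with `|Y| ≤ r|X|` meets every
edge of `G(σ)` at `X`. Since each vertex of `X` has degree `> ε log n`, double counting yields at
least `T = ⌈|X| ε log n / r⌉` edges of `G(σ)` among the `N ≤ r|X|² C(n-2, r-2)` `r`-sets meeting
both `X` and `Y`. Each is an edge with probability `p ≤ log n / C(n-1, r-1)`, and
`C(n-2, r-2) / C(n-1, r-1) = (r-1)/(n-1)`, so this has probability at most
`C(N, T) p^T ≤ (e N p / T)^T ≤ (6 r³ ε⁻¹ |X| / n)^T`. As `|X| ≤ n (log n)^{-1/r}`, the base tends to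
`0`, and for large `n` the bound is `n^{-(r+5)|X|}`; a union bound over the at most
`n^{|X|} (r|X| + 1) n^{r|X|} ≤ n^{(r+1)|X|+2}` pairs `(X, Y)` and over `|X| ≤ n` leaves a
failure probability `≤ 1/n`. -/

instance isProbabilityMeasure_volume_restrict_unitInterval :
    IsProbabilityMeasure (volume.restrict (Set.Icc (0 : ℝ) 1)) :=
  ⟨by simp⟩

lemma volume_restrict_unitInterval_Iic_le (σ : ℝ) :
    volume.restrict (Set.Icc (0 : ℝ) 1) (Set.Iic σ) ≤ ENNReal.ofReal σ := by
  rw [Measure.restrict_apply measurableSet_Iic]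
  calc volume (Set.Iic σ ∩ Set.Icc 0 1) ≤ volume (Set.Icc 0 σ) :=
        measure_mono fun x hx => ⟨hx.2.1, hx.1⟩
    _ = ENNReal.ofReal σ := by rw [Real.volume_Icc, sub_zero]

section UniformProduct

variable {ι : Type*} [Fintype ι]

lemma pi_unitInterval_forall_le_le (A : Finset ι) (σ : ℝ) :
    Measure.pi (fun _ : ι => volume.restrict (Set.Icc (0 : ℝ) 1)) {ξ | ∀ i ∈ A, ξ i ≤ σ}
      ≤ ENNReal.ofReal σ ^ #A := by
  have hset : {ξ : ι → ℝ | ∀ i ∈ A, ξ i ≤ σ} =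
      Set.pi Set.univ fun i => if i ∈ (A : Set ι) then Set.Iic σ else Set.univ := by
    rw [Set.pi_univ_ite]; rfl
  rw [hset, Measure.pi_pi]
  simp only [Finset.mem_coe, apply_ite, measure_univ]
  rw [Finset.prod_ite_mem, Finset.univ_inter, Finset.prod_const]
  exact pow_le_pow_left' (volume_restrict_unitInterval_Iic_le σ) _

lemma pi_unitInterval_le_card_filter_le (F : Finset ι) (T : ℕ) (σ : ℝ) :
    Measure.pi (fun _ : ι => volume.restrict (Set.Icc (0 : ℝ) 1)) {ξ | T ≤ #{i ∈ F | ξ i ≤ σ}}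
      ≤ (#F).choose T * ENNReal.ofReal σ ^ T := by
  have hcover : {ξ : ι → ℝ | T ≤ #{i ∈ F | ξ i ≤ σ}} ⊆
      ⋃ A ∈ F.powersetCard T, {ξ | ∀ i ∈ A, ξ i ≤ σ} := by
    intro ξ hξ
    obtain ⟨A, hA, hAcard⟩ := Finset.exists_subset_card_eq hξ
    refine Set.mem_biUnion (Finset.mem_powersetCard.2 ⟨hA.trans (filter_subset _ _), hAcard⟩) ?_
    exact fun i hi => (Finset.mem_filter.1 (hA hi)).2
  calc _ ≤ _ := measure_mono hcover
    _ ≤ ∑ A ∈ F.powersetCard T, ENNReal.ofReal σ ^ T :=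
      (measure_biUnion_finset_le _ _).trans <| Finset.sum_le_sum fun A hA => by
        simpa [(Finset.mem_powersetCard.1 hA).2] using pi_unitInterval_forall_le_le A σ
    _ = _ := by rw [Finset.sum_const, Finset.card_powersetCard, nsmul_eq_mul]

end UniformProduct

lemma measure_biUnion_finset_le_ofReal_mul {Ω β : Type*} [MeasurableSpace Ω] (μ : Measure Ω)
    {s : Finset β} {f : β → Set Ω} {m c : ℝ} (hs : (#s : ℝ) ≤ m) (hc : 0 ≤ c)
    (h : ∀ i ∈ s, μ (f i) ≤ ENNReal.ofReal c) :
    μ (⋃ i ∈ s, f i) ≤ ENNReal.ofReal (m * c) :=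
  calc μ (⋃ i ∈ s, f i) ≤ #s • ENNReal.ofReal c :=
        (measure_biUnion_finset_le _ _).trans (Finset.sum_le_card_nsmul _ _ _ h)
    _ = ENNReal.ofReal (#s * c) := by
        rw [nsmul_eq_mul, ENNReal.ofReal_mul (Nat.cast_nonneg _), ENNReal.ofReal_natCast]
    _ ≤ ENNReal.ofReal (m * c) := ENNReal.ofReal_le_ofReal (by gcongr)

lemma tendsto_measure_nhds_one_of_compl {Ω : ℕ → Type*} [∀ n, MeasurableSpace (Ω n)]
    (μ : ∀ n, Measure (Ω n)) [∀ n, IsProbabilityMeasure (μ n)] (s : ∀ n, Set (Ω n))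
    (h : Tendsto (fun n => μ n (s n)ᶜ) atTop (nhds 0)) :
    Tendsto (fun n => μ n (s n)) atTop (nhds 1) := by
  have hlow : Tendsto (fun n => 1 - μ n (s n)ᶜ) atTop (nhds 1) := by
    simpa using ENNReal.Tendsto.sub tendsto_const_nhds h (Or.inl ENNReal.one_ne_top)
  refine tendsto_of_tendsto_of_tendsto_of_le_of_le hlow tendsto_const_nhds (fun n => ?_)
    (fun n => prob_le_one)
  calc 1 - μ n (s n)ᶜ ≤ μ n (s n ∪ (s n)ᶜ) - μ n (s n)ᶜ := by
        rw [Set.union_compl_self, measure_univ]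
    _ ≤ μ n (s n) := tsub_le_iff_right.2 (measure_union_le _ _)

lemma Nat.choose_sub_two_mul_le {n r : ℕ} (hn : 2 ≤ n) (hr : 2 ≤ r) :
    (n - 2).choose (r - 2) * n ≤ 2 * r * (n - 1).choose (r - 1) := by
  obtain ⟨a, rfl⟩ := Nat.exists_eq_add_of_le' hn
  obtain ⟨b, rfl⟩ := Nat.exists_eq_add_of_le' hr
  have h := Nat.add_one_mul_choose_eq a b
  simp only [Nat.add_sub_cancel, show a + 2 - 1 = a + 1 by omega,
    show b + 2 - 1 = b + 1 by omega]
  nlinarith [Nat.zero_le (a.choose b), Nat.zero_le ((a + 1).choose (b + 1))]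

section RSets

variable {α : Type*} [Fintype α] [DecidableEq α] {r : ℕ}

def crossingRSets (r : ℕ) (X Y : Finset α) : Finset {S : Finset α // #S = r} :=
  {S | (S.1 ∩ X).Nonempty ∧ (S.1 ∩ Y).Nonempty}

/-- `X` is `m`-expansive in `G(σ)`, the hypergraph whose edges are the `S` with `ξ S ≤ σ`. -/
def IsExpansive (ξ : {S : Finset α // #S = r} → ℝ) (σ : ℝ) (m : ℕ) (X : Finset α) : Prop :=
  ∀ Y : Finset α, Disjoint X Y → #Y ≤ m * #X →
    ∃ S : {S : Finset α // #S = r}, ξ S ≤ σ ∧ (S.1 ∩ X).Nonempty ∧ Disjoint S.1 Y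

lemma card_rSets_mem_mem_le {x y : α} (hxy : x ≠ y) :
    #{S : {S : Finset α // #S = r} | x ∈ S.1 ∧ y ∈ S.1} ≤ (Fintype.card α - 2).choose (r - 2) := by
  have hcard : #((univ.erase x).erase y) = Fintype.card α - 2 := by
    rw [card_erase_of_mem (mem_erase.2 ⟨hxy.symm, mem_univ y⟩), card_erase_of_mem (mem_univ x),
      card_univ]
    omega
  rw [← hcard, ← card_powersetCard]
  refine card_le_card_of_injOn (fun S => (S.1.erase x).erase y) (fun S hS => ?_) ?_
  · obtain ⟨hx, hy⟩ := (mem_filter.1 hS).2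
    refine mem_powersetCard.2 ⟨erase_subset_erase _ (erase_subset_erase _ (subset_univ _)), ?_⟩
    rw [card_erase_of_mem (mem_erase.2 ⟨hxy.symm, hy⟩), card_erase_of_mem hx, S.2]
    omega
  · have hrebuild : ∀ S ∈ ({S | x ∈ S.1 ∧ y ∈ S.1} : Finset {S : Finset α // #S = r}),
        insert x (insert y ((S.1.erase x).erase y)) = S.1 := fun S hS => by
      obtain ⟨hx, hy⟩ := (mem_filter.1 hS).2
      rw [insert_erase (mem_erase.2 ⟨hxy.symm, hy⟩), insert_erase hx]
    intro S hS S' hS' h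
    apply Subtype.ext
    rw [← hrebuild S hS, ← hrebuild S' hS']
    exact congrArg (fun T => insert x (insert y T)) h

lemma card_crossingRSets_le {X Y : Finset α} (hXY : Disjoint X Y) :
    #(crossingRSets r X Y) ≤ #X * #Y * (Fintype.card α - 2).choose (r - 2) := by
  have hcover : crossingRSets r X Y ⊆
      X.biUnion fun x => Y.biUnion fun y => {S | x ∈ S.1 ∧ y ∈ S.1} := by
    intro S hS
    obtain ⟨⟨x, hx⟩, ⟨y, hy⟩⟩ := (mem_filter.1 hS).2
    rw [mem_inter] at hx hy
    exact mem_biUnion.2 ⟨x, hx.2, mem_biUnion.2 ⟨y, hy.2, mem_filter.2 ⟨mem_univ _, hx.1, hy.1⟩⟩⟩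
  calc #(crossingRSets r X Y)
      ≤ ∑ x ∈ X, ∑ y ∈ Y, #{S : {S : Finset α // #S = r} | x ∈ S.1 ∧ y ∈ S.1} :=
        (card_le_card hcover).trans <| card_biUnion_le.trans <|
          sum_le_sum fun _ _ => card_biUnion_le
    _ ≤ ∑ x ∈ X, ∑ y ∈ Y, (Fintype.card α - 2).choose (r - 2) :=
        sum_le_sum fun x hx => sum_le_sum fun y hy =>
          card_rSets_mem_mem_le fun h => disjoint_left.1 hXY hx (h ▸ hy)
    _ = #X * #Y * (Fintype.card α - 2).choose (r - 2) := by
        simp only [sum_const, smul_eq_mul, mul_assoc]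

lemma card_crossingRSets_mul_card_le (hr : 2 ≤ r) (hα : 2 ≤ Fintype.card α) {X Y : Finset α}
    (hXY : Disjoint X Y) (hY : #Y ≤ r * #X) :
    #(crossingRSets r X Y) * Fintype.card α ≤
      2 * r ^ 2 * #X ^ 2 * (Fintype.card α - 1).choose (r - 1) :=
  calc #(crossingRSets r X Y) * Fintype.card α
      ≤ #X * (r * #X) * ((Fintype.card α - 2).choose (r - 2) * Fintype.card α) := by
        rw [← mul_assoc]
        exact Nat.mul_le_mul_right _ ((card_crossingRSets_le hXY).trans
          (Nat.mul_le_mul_right _ (Nat.mul_le_mul_left _ hY)))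
    _ ≤ #X * (r * #X) * (2 * r * (Fintype.card α - 1).choose (r - 1)) :=
        Nat.mul_le_mul_left _ (Nat.choose_sub_two_mul_le hα hr)
    _ = 2 * r ^ 2 * #X ^ 2 * (Fintype.card α - 1).choose (r - 1) := by ring

lemma card_mul_le_card_crossingRSets_mul {ξ : {S : Finset α // #S = r} → ℝ} {σ : ℝ} {m : ℕ}
    {X Y : Finset α} (hdeg : ∀ v ∈ X, m ≤ #{S | v ∈ S.1 ∧ ξ S ≤ σ})
    (hY : ∀ S, ξ S ≤ σ → (S.1 ∩ X).Nonempty → ¬ Disjoint S.1 Y) :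
    #X * m ≤ #{S ∈ crossingRSets r X Y | ξ S ≤ σ} * r := by
  refine card_mul_le_card_mul (fun (v : α) (S : {S : Finset α // #S = r}) => v ∈ S.1)
    (fun v hv => (hdeg v hv).trans (card_le_card fun S hS => ?_)) fun S _ => ?_
  · obtain ⟨hvS, hξS⟩ := (mem_filter.1 hS).2
    have hSX : (S.1 ∩ X).Nonempty := ⟨v, mem_inter.2 ⟨hvS, hv⟩⟩
    have hSY : (S.1 ∩ Y).Nonempty := not_disjoint_iff_nonempty_inter.1 (hY S hξS hSX)
    exact mem_filter.2 ⟨mem_filter.2 ⟨mem_filter.2 ⟨mem_univ _, hSX, hSY⟩, hξS⟩, hvS⟩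
  · calc #(X.bipartiteBelow (fun v S => v ∈ S.1) S) ≤ #S.1 :=
          card_le_card fun v hv => (mem_filter.1 hv).2
      _ = r := S.2

end RSets

lemma Nat.choose_mul_pow_le (N T : ℕ) {s : ℝ} (hs : 0 ≤ s) :
    (N.choose T : ℝ) * s ^ T ≤ (Real.exp 1 * N * s / T) ^ T := by
  have hTT : (0 : ℝ) < (T : ℝ) ^ T := by
    rcases T.eq_zero_or_pos with rfl | hT
    · simp
    · positivity
  have hfact : (T : ℝ) ^ T / T.factorial ≤ Real.exp 1 ^ T := by
    simpa [← Real.exp_nat_mul] using Real.pow_div_factorial_le_exp (T : ℝ) (Nat.cast_nonneg T) T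
  calc (N.choose T : ℝ) * s ^ T ≤ (N : ℝ) ^ T / T.factorial * s ^ T := by
        gcongr; exact Nat.choose_le_pow_div T N
    _ = (N * s / T) ^ T * ((T : ℝ) ^ T / T.factorial) := by
        rw [div_pow, mul_pow]; field_simp
    _ ≤ (N * s / T) ^ T * Real.exp 1 ^ T := by gcongr
    _ = (Real.exp 1 * N * s / T) ^ T := by rw [← mul_pow]; ring_nf

lemma pow_le_exp_neg_of_le_exp_neg {x c y : ℝ} {T : ℕ} (hx : 0 ≤ x) (hxc : x ≤ Real.exp (-c))
    (hy : y ≤ c * T) : x ^ T ≤ Real.exp (-y) :=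
  calc x ^ T ≤ Real.exp (-c) ^ T := by gcongr
    _ = Real.exp (-(c * T)) := by rw [← Real.exp_nat_mul]; ring_nf
    _ ≤ Real.exp (-y) := Real.exp_le_exp.2 (neg_le_neg hy)

instance isProbabilityMeasure_xiMeasure (n r : ℕ) : IsProbabilityMeasure (xiMeasure n r) := by
  unfold xiMeasure; infer_instance

/-- `hsmall` is what makes the base `e N p / T` of `Nat.choose_mul_pow_le` at most
`exp (-(r (r + 5) / ε))`: that base is `≤ 6 r³ ε⁻¹ |X| / n`, and `T ≥ |X| ε log n / r` then turns
the `T`-th power into `exp (-(r + 5) |X| log n) = n ^ (-(r + 5) |X|)`. -/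
lemma xiMeasure_many_crossing_edges_le {n r : ℕ} (hr : 2 ≤ r) (hrn : r ≤ n) {ε L σ : ℝ}
    (hε : 0 < ε) (hL : 0 < L) (hσ : σ ≤ L / (n - 1).choose (r - 1))
    (hsmall : 6 * r ^ 3 / ε * L ^ (-(1 : ℝ) / r) ≤ Real.exp (-(r * (r + 5) / ε)))
    {X Y : Finset (Fin n)} (hXY : Disjoint X Y) (hX : X.Nonempty) (hY : #Y ≤ r * #X)
    (hXZ : (#X : ℝ) ≤ n * L ^ (-(1 : ℝ) / r)) :
    xiMeasure n r {ξ | ⌈#X * ε * L / r⌉₊ ≤ #{S ∈ crossingRSets r X Y | ξ S ≤ σ}}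
      ≤ ENNReal.ofReal (Real.exp (-((r + 5) * #X * L))) := by
  have hN : (#(crossingRSets r X Y) : ℝ) * n ≤ 2 * r ^ 2 * #X ^ 2 * (n - 1).choose (r - 1) := by
    have h := card_crossingRSets_mul_card_le hr (by simp; omega) hXY hY
    rw [Fintype.card_fin] at h
    exact_mod_cast h
  set k := #X
  set N := #(crossingRSets r X Y)
  set T := ⌈k * ε * L / r⌉₊
  set C := ((n - 1).choose (r - 1) : ℝ)
  have hC : 0 < C := Nat.cast_pos.2 (Nat.choose_pos (by omega))
  have hk : (0 : ℝ) < k := Nat.cast_pos.2 (card_pos.2 hX)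
  have hn : (0 : ℝ) < n := by norm_cast; omega
  have hT : k * ε * L / r ≤ T := Nat.le_ceil _
  have hbase : Real.exp 1 * N * (L / C) / T ≤ Real.exp (-(r * (r + 5) / ε)) := by
    have he : Real.exp 1 ≤ 3 := (Real.exp_one_lt_d9.trans (by norm_num)).le
    calc Real.exp 1 * N * (L / C) / T ≤ (6 * r ^ 2 * k ^ 2 * L / n) / (k * ε * L / r) := by
          gcongr
          rw [mul_div_assoc', div_le_div_iff₀ hC hn]
          calc Real.exp 1 * N * L * n = Real.exp 1 * (N * n) * L := by ring
            _ ≤ 3 * (2 * r ^ 2 * k ^ 2 * C) * L := by gcongr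
            _ = 6 * r ^ 2 * k ^ 2 * L * C := by ring
      _ = 6 * r ^ 3 / ε * (k / n) := by field_simp
      _ ≤ 6 * r ^ 3 / ε * L ^ (-(1 : ℝ) / r) := by
          gcongr; rwa [div_le_iff₀' hn]
      _ ≤ _ := hsmall
  calc xiMeasure n r {ξ | T ≤ #{S ∈ crossingRSets r X Y | ξ S ≤ σ}}
      ≤ N.choose T * ENNReal.ofReal σ ^ T := pi_unitInterval_le_card_filter_le _ T σ
    _ ≤ N.choose T * ENNReal.ofReal (L / C) ^ T := by gcongr
    _ = ENNReal.ofReal (N.choose T * (L / C) ^ T) := by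
        rw [ENNReal.ofReal_mul (Nat.cast_nonneg _), ENNReal.ofReal_pow (by positivity),
          ENNReal.ofReal_natCast]
    _ ≤ ENNReal.ofReal (Real.exp (-((r + 5) * k * L))) := by
        refine ENNReal.ofReal_le_ofReal ((Nat.choose_mul_pow_le N T (by positivity)).trans ?_)
        refine pow_le_exp_neg_of_le_exp_neg (by positivity) hbase ?_
        calc ((r : ℝ) + 5) * k * L = r * (r + 5) / ε * (k * ε * L / r) := by
              field_simp
          _ ≤ r * (r + 5) / ε * T := by gcongr

lemma exists_le_card_crossingRSets_of_not_isExpansive {n r : ℕ} (hr : 0 < r)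
    {ξ : RSubsets n r → ℝ} {σ ε : ℝ} {X : Finset (Fin n)} (hW : Disjoint X (lowDeg ξ σ ε))
    (hexp : ¬ IsExpansive ξ σ r X) :
    ∃ Y, Disjoint X Y ∧ #Y ≤ r * #X ∧
      ⌈#X * ε * Real.log n / r⌉₊ ≤ #{S ∈ crossingRSets r X Y | ξ S ≤ σ} := by
  simp only [IsExpansive, not_forall, not_exists, not_and] at hexp
  obtain ⟨Y, hXY, hY, hno⟩ := hexp
  refine ⟨Y, hXY, hY, Nat.ceil_le.2 ?_⟩
  have hdeg : ∀ v ∈ X, ⌈ε * Real.log n⌉₊ ≤ #{S : RSubsets n r | v ∈ S.1 ∧ ξ S ≤ σ} := by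
    intro v hv
    have hvW := disjoint_left.1 hW hv
    simp only [lowDeg, mem_filter, mem_univ, true_and, not_le] at hvW
    exact Nat.ceil_le.2 hvW.le
  have hcount := card_mul_le_card_crossingRSets_mul hdeg hno
  rw [div_le_iff₀ (Nat.cast_pos.2 hr)]
  calc #X * ε * Real.log n = #X * (ε * Real.log n) := by ring
    _ ≤ #X * ⌈ε * Real.log n⌉₊ := by gcongr; exact Nat.le_ceil _
    _ ≤ #{S ∈ crossingRSets r X Y | ξ S ≤ σ} * r := by exact_mod_cast hcount

lemma compl_forall_isExpansive_subset_biUnion {n r : ℕ} (hr : 0 < r) (σ ε Z : ℝ) :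
    {ξ : RSubsets n r → ℝ | ∀ X : Finset (Fin n), X.Nonempty → Disjoint X (lowDeg ξ σ ε) →
        (#X : ℝ) ≤ Z → IsExpansive ξ σ r X}ᶜ ⊆
      ⋃ k ∈ {k ∈ Icc 1 n | ((k : ℕ) : ℝ) ≤ Z}, ⋃ X ∈ powersetCard k univ,
        ⋃ j ∈ range (r * k + 1), ⋃ Y ∈ powersetCard j Xᶜ,
          {ξ | ⌈#X * ε * Real.log n / r⌉₊ ≤ #{S ∈ crossingRSets r X Y | ξ S ≤ σ}} := by
  intro ξ hξ
  simp only [Set.mem_compl_iff, Set.mem_ofPred_eq, not_forall] at hξ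
  obtain ⟨X, hX, hW, hXZ, hexp⟩ := hξ
  obtain ⟨Y, hXY, hY, hcard⟩ := exists_le_card_crossingRSets_of_not_isExpansive hr hW hexp
  simp only [Set.mem_iUnion, exists_prop]
  refine ⟨#X, mem_filter.2 ⟨mem_Icc.2 ⟨card_pos.2 hX, card_le_univ X |>.trans_eq
    (Fintype.card_fin n)⟩, hXZ⟩, X, mem_powersetCard.2 ⟨subset_univ X, rfl⟩, #Y,
    mem_range.2 (Nat.lt_succ_of_le hY), Y, mem_powersetCard.2 ⟨?_, rfl⟩, hcard⟩
  exact fun y hy => mem_compl.2 fun hyX => disjoint_left.1 hXY hyX hy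

lemma pow_mul_mul_exp_neg_log_le_inv_sq {n r k : ℕ} (hk : 1 ≤ k) (hkn : k ≤ n)
    (hrn : r + 1 ≤ n) :
    (n : ℝ) ^ k * ((r * k + 1 : ℕ) * (n ^ (r * k) * Real.exp (-((r + 5) * k * Real.log n))))
      ≤ ((n : ℝ) ^ 2)⁻¹ := by
  have hn : (1 : ℝ) ≤ n := by norm_cast; omega
  have hexp : Real.exp (-((r + 5) * k * Real.log n)) = ((n : ℝ) ^ ((r + 5) * k))⁻¹ := by
    rw [Real.exp_neg, ← Real.rpow_natCast, Real.rpow_def_of_pos (by positivity)]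
    push_cast
    ring_nf
  have hrk : ((r * k + 1 : ℕ) : ℝ) ≤ n ^ 2 := by
    exact_mod_cast (show r * k + 1 ≤ n ^ 2 by nlinarith)
  have hpow : (n : ℝ) ^ k * n ^ 2 * n ^ (r * k) * n ^ 2 ≤ n ^ ((r + 5) * k) := by
    simp only [← pow_add]
    exact pow_le_pow_right₀ hn (by nlinarith)
  have hpos : (0 : ℝ) < n ^ ((r + 5) * k) := by positivity
  rw [hexp]
  calc (n : ℝ) ^ k * (((r * k + 1 : ℕ) : ℝ) * (n ^ (r * k) * ((n : ℝ) ^ ((r + 5) * k))⁻¹))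
      ≤ (n : ℝ) ^ k * (n ^ 2 * (n ^ (r * k) * ((n : ℝ) ^ ((r + 5) * k))⁻¹)) := by gcongr
    _ = (n : ℝ) ^ k * n ^ 2 * n ^ (r * k) * n ^ 2 / n ^ ((r + 5) * k) / n ^ 2 := by
        field_simp
    _ ≤ (n : ℝ) ^ ((r + 5) * k) / n ^ ((r + 5) * k) / n ^ 2 := by gcongr
    _ = ((n : ℝ) ^ 2)⁻¹ := by rw [div_self hpos.ne', one_div]

lemma xiMeasure_compl_forall_isExpansive_le {n r : ℕ} (hr : 2 ≤ r) (hrn : r + 1 ≤ n)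
    {ε g : ℝ} (hε : 0 < ε) (hg : 0 ≤ g) (hL : 1 ≤ Real.log n)
    (hsmall : 6 * r ^ 3 / ε * Real.log n ^ (-(1 : ℝ) / r) ≤ Real.exp (-(r * (r + 5) / ε))) :
    xiMeasure n r {ξ | ∀ X : Finset (Fin n), X.Nonempty →
        Disjoint X (lowDeg ξ ((Real.log n - g) / (n - 1).choose (r - 1)) ε) →
        (#X : ℝ) ≤ n * Real.log n ^ (-(1 : ℝ) / r) →
        IsExpansive ξ ((Real.log n - g) / (n - 1).choose (r - 1)) r X}ᶜ
      ≤ ENNReal.ofReal (n : ℝ)⁻¹ := by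
  set L := Real.log n
  set Z := n * L ^ (-(1 : ℝ) / r)
  have hn : (1 : ℝ) ≤ n := by norm_cast; omega
  have hσ : (L - g) / (n - 1).choose (r - 1) ≤ L / (n - 1).choose (r - 1) :=
    div_le_div_of_nonneg_right (by linarith) (Nat.cast_nonneg _)
  have hK : (#{k ∈ Icc 1 n | ((k : ℕ) : ℝ) ≤ Z} : ℝ) ≤ n := by
    exact_mod_cast (card_filter_le _ _).trans (by rw [Nat.card_Icc, Nat.add_sub_cancel])
  refine (measure_mono (compl_forall_isExpansive_subset_biUnion (by omega) _ ε Z)).trans ?_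
  calc _ ≤ ENNReal.ofReal (n * ((n : ℝ) ^ 2)⁻¹) :=
        measure_biUnion_finset_le_ofReal_mul _ hK (by positivity) fun k hk => ?_
    _ = ENNReal.ofReal (n : ℝ)⁻¹ := by congr 1; field_simp
  obtain ⟨⟨hk1, hkn⟩, hkZ⟩ : (1 ≤ k ∧ k ≤ n) ∧ (k : ℝ) ≤ Z := by
    simpa only [mem_filter, mem_Icc] using hk
  have hcardX : (#(powersetCard k (univ : Finset (Fin n))) : ℝ) ≤ n ^ k := by
    rw [card_powersetCard, card_univ, Fintype.card_fin]
    exact_mod_cast Nat.choose_le_pow n k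
  have hcardY : ∀ X : Finset (Fin n), ∀ j ∈ range (r * k + 1),
      (#(powersetCard j Xᶜ) : ℝ) ≤ n ^ (r * k) := by
    intro X j hj
    rw [card_powersetCard]
    calc ((#Xᶜ).choose j : ℝ) ≤ (#Xᶜ : ℝ) ^ j := by exact_mod_cast Nat.choose_le_pow _ j
      _ ≤ (n : ℝ) ^ j := by
          gcongr; exact_mod_cast (card_le_univ Xᶜ).trans_eq (Fintype.card_fin n)
      _ ≤ (n : ℝ) ^ (r * k) := pow_le_pow_right₀ hn (Nat.lt_succ_iff.1 (mem_range.1 hj))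
  refine (measure_biUnion_finset_le_ofReal_mul _ hcardX (by positivity) fun X hX =>
    measure_biUnion_finset_le_ofReal_mul _ (by simp) (by positivity) fun j hj =>
      measure_biUnion_finset_le_ofReal_mul _ (hcardY X j hj) (by positivity) fun Y hY => ?_).trans
    (ENNReal.ofReal_le_ofReal (pow_mul_mul_exp_neg_log_le_inv_sq hk1 hkn hrn))
  obtain ⟨-, hXk⟩ := mem_powersetCard.1 hX
  obtain ⟨hYX, hYj⟩ := mem_powersetCard.1 hY
  rw [← hXk]
  refine xiMeasure_many_crossing_edges_le hr (by omega) hε (by linarith) hσ hsmall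
    (disjoint_of_subset_right hYX disjoint_compl_right) (card_pos.1 (by omega)) ?_ (hXk ▸ hkZ)
  rw [hYj, hXk]
  exact Nat.lt_succ_iff.1 (mem_range.1 hj)

lemma tendsto_log_rpow_neg_inv {r : ℕ} (hr : 0 < r) :
    Tendsto (fun n : ℕ => Real.log n ^ (-(1 : ℝ) / r)) atTop (nhds 0) := by
  have h := (tendsto_rpow_neg_atTop (by positivity : (0 : ℝ) < 1 / r)).comp
    (Real.tendsto_log_atTop.comp tendsto_natCast_atTop_atTop)
  simpa only [neg_div, Function.comp_def] using h

/-- There is `ε₀ > 0` (depending only on `r`) such that for every fixed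
`ε ∈ (0, ε₀)` and every `g → ∞` with `g = o(log n)`, w.h.p. every nonempty
`X ⊆ [n] ∖ W_σ` with `|X| ≤ Z = n (log n)^{-1/r}` is `r`-expansive in `G(σ)`:
for every `Y` disjoint from `X` with `|Y| ≤ r|X|` some edge of `G(σ)` meets `X`
and is disjoint from `Y`. -/
theorem stmt16 (r : ℕ) (hr : 2 ≤ r) :
    ∃ ε₀ : ℝ, 0 < ε₀ ∧
      ∀ ε : ℝ, 0 < ε → ε < ε₀ →
      ∀ g : ℕ → ℝ, Tendsto g atTop atTop →
        (g =o[atTop] fun n : ℕ => Real.log n) →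
        Tendsto (fun n : ℕ =>
            xiMeasure n r {ξ : RSubsets n r → ℝ |
              let σ : ℝ := (Real.log n - g n) / (Nat.choose (n - 1) (r - 1) : ℝ)
              ∀ X : Finset (Fin n), X.Nonempty → Disjoint X (lowDeg ξ σ ε) →
                (X.card : ℝ) ≤ n * Real.log n ^ (-(1 : ℝ) / r) →
                ∀ Y : Finset (Fin n), Disjoint X Y → Y.card ≤ r * X.card →
                  ∃ S : RSubsets n r, ξ S ≤ σ ∧ (S.1 ∩ X).Nonempty ∧ Disjoint S.1 Y})
          atTop (nhds 1) := by
  refine ⟨1, one_pos, fun ε hε _ g hg _ => ?_⟩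
  refine tendsto_measure_nhds_one_of_compl (fun n => xiMeasure n r) _ ?_
  have hsmall : ∀ᶠ n : ℕ in atTop,
      6 * r ^ 3 / ε * Real.log n ^ (-(1 : ℝ) / r) ≤ Real.exp (-(r * (r + 5) / ε)) := by
    have h := (tendsto_log_rpow_neg_inv (by omega : 0 < r)).const_mul (6 * r ^ 3 / ε)
    rw [mul_zero] at h
    exact (h.eventually_lt_const (Real.exp_pos _)).mono fun n => le_of_lt
  have hinv : Tendsto (fun n : ℕ => ENNReal.ofReal (n : ℝ)⁻¹) atTop (nhds 0) := by
    simpa using ENNReal.tendsto_ofReal tendsto_inv_atTop_nhds_zero_nat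
  refine tendsto_of_tendsto_of_tendsto_of_le_of_le' tendsto_const_nhds hinv
    (Eventually.of_forall fun n => zero_le) ?_
  filter_upwards [hg.eventually_ge_atTop 0, eventually_ge_atTop (r + 1),
    (Real.tendsto_log_atTop.comp tendsto_natCast_atTop_atTop).eventually_ge_atTop 1, hsmall]
    with n hgn hrn hL hsmall_n
  exact xiMeasure_compl_forall_isExpansive_le hr hrn hε hgn hL hsmall_n
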